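/- Among partitions of m ≥ 2, the two largest values of ε(λ) = Σ_i binom(λ^(i),2) are achieved precisely at the partitions (m) and (m-1,1): for every partition λ of m other than (m) and (m-1,1), ε(λ) < ε((m-1,1)) < ε((m)). -/

import Mathlib

/-- `ε(λ) = Σ_i binom(λ^(i), 2)` for a partition `λ`. -/
def eps {m : ℕ} (p : Nat.Partition m) : ℕ := (p.parts.map (fun a => a.choose 2)).sum

/-!
`ε` counts pairs of cells lying in a common part, so merging parts increases it and
`ε(λ) ≤ binom(m, 2)`. A partition other than `(m)` and `(m-1,1)` either
has all parts equal to `1` (so `ε = 0`), or has a part `a ≥ 2` whose complement `m - a` is at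
least `2`; then `ε(λ) ≤ binom(a, 2) + binom(m - a, 2)`, which is smaller than
`binom(m - 1, 2) = binom(a, 2) + binom(m - a - 1, 2) + a (m - a - 1)`.
-/

namespace Nat

theorem choose_two_add (a b : ℕ) : (a + b).choose 2 = a.choose 2 + b.choose 2 + a * b := by
  induction b with
  | zero => simp
  | succ b ih =>
    rw [← add_assoc, choose_succ_succ', choose_succ_succ' b, ih, choose_one_right,
      choose_one_right]
    ring

theorem choose_two_add_choose_two_lt {a b : ℕ} (ha : 2 ≤ a) (hb : 2 ≤ b) :
    a.choose 2 + b.choose 2 < (a + b - 1).choose 2 := by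
  obtain ⟨c, rfl⟩ : ∃ c, b = c + 1 := ⟨b - 1, by omega⟩
  have hc : c < a * c := lt_mul_left (by omega) (by omega)
  rw [show a + (c + 1) - 1 = a + c by omega, choose_two_add, choose_two_add a c, choose_succ_self,
    mul_one]
  omega

theorem choose_two_pred_lt {m : ℕ} (hm : 2 ≤ m) : (m - 1).choose 2 < m.choose 2 := by
  obtain ⟨k, rfl⟩ : ∃ k, m = k + 2 := ⟨m - 2, by omega⟩
  simp [choose_succ_succ' (k + 1)]

end Nat

theorem Multiset.sum_map_choose_two_le (s : Multiset ℕ) :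
    (s.map (·.choose 2)).sum ≤ s.sum.choose 2 := by
  induction s using Multiset.induction with
  | empty => simp
  | cons a s ih =>
    simp only [Multiset.map_cons, Multiset.sum_cons, Nat.choose_two_add]
    omega

namespace Nat.Partition

variable {n : ℕ} (p : Nat.Partition n)

def erase {a : ℕ} (ha : a ∈ p.parts) : Nat.Partition (n - a) where
  parts := p.parts.erase a
  parts_pos h := p.parts_pos (Multiset.mem_of_mem_erase h)
  parts_sum := by
    have := Multiset.sum_erase ha
    rw [p.parts_sum] at this
    omega

theorem le_of_mem {a : ℕ} (ha : a ∈ p.parts) : a ≤ n :=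
  p.parts_sum ▸ Multiset.le_sum_of_mem ha

theorem parts_eq_replicate_one (h : ∀ x ∈ p.parts, x ≤ 1) : p.parts = .replicate n 1 := by
  have hones : p.parts = .replicate p.parts.card 1 :=
    Multiset.eq_replicate_card.2 fun x hx => le_antisymm (h x hx) (p.parts_pos hx)
  have hcard : p.parts.card = n := by
    have := p.parts_sum
    rwa [hones, Multiset.sum_replicate, smul_eq_mul, mul_one] at this
  rw [hones, hcard]

theorem parts_eq_replicate_one_of_le_one (hn : n ≤ 1) : p.parts = .replicate n 1 :=
  p.parts_eq_replicate_one fun _ hx => (p.le_of_mem hx).trans hn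

theorem eps_le : eps p ≤ n.choose 2 :=
  p.parts.sum_map_choose_two_le.trans_eq (by rw [p.parts_sum])

theorem eps_eq_add_eps_erase {a : ℕ} (ha : a ∈ p.parts) :
    eps p = a.choose 2 + eps (p.erase ha) := by
  rw [eps, ← Multiset.cons_erase ha, Multiset.map_cons, Multiset.sum_cons]
  rfl

theorem eps_lt_of_mem {a : ℕ} (ha : a ∈ p.parts) (ha2 : 2 ≤ a) (hrest : 2 ≤ n - a) :
    eps p < (n - 1).choose 2 :=
  calc eps p = a.choose 2 + eps (p.erase ha) := p.eps_eq_add_eps_erase ha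
    _ ≤ a.choose 2 + (n - a).choose 2 := Nat.add_le_add_left (eps_le _) _
    _ < (a + (n - a) - 1).choose 2 := Nat.choose_two_add_choose_two_lt ha2 hrest
    _ = (n - 1).choose 2 := by rw [Nat.add_sub_cancel' (p.le_of_mem ha)]

end Nat.Partition

/-- Among partitions of `m ≥ 2`, the two largest values of `ε` are achieved precisely
at `(m)` and `(m-1,1)`: for any other partition `λ`, `ε(λ) < ε((m-1,1)) < ε((m))`. -/
theorem stmt2 (m : ℕ) (hm : 2 ≤ m) (p : Nat.Partition m)
    (h1 : p.parts ≠ {m}) (h2 : p.parts ≠ (m - 1) ::ₘ {1}) :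
    eps p < (m - 1).choose 2 ∧ (m - 1).choose 2 < m.choose 2 := by
  refine ⟨?_, Nat.choose_two_pred_lt hm⟩
  by_cases hbig : ∃ a ∈ p.parts, 2 ≤ a
  · obtain ⟨a, ha, ha2⟩ := hbig
    refine p.eps_lt_of_mem ha ha2 (not_lt.1 fun hsmall => ?_)
    have hparts : p.parts = a ::ₘ .replicate (m - a) 1 := by
      rw [← (p.erase ha).parts_eq_replicate_one_of_le_one (by omega)]
      exact (Multiset.cons_erase ha).symm
    have ham := p.le_of_mem ha
    obtain hk | hk : m - a = 0 ∨ m - a = 1 := by omega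
    · exact h1 (by rw [hparts, hk, show a = m by omega]; rfl)
    · exact h2 (by rw [hparts, hk, show a = m - 1 by omega]; rfl)
  · push Not at hbig
    have hones := p.parts_eq_replicate_one fun x hx => Nat.le_of_lt_succ (hbig x hx)
    obtain rfl | hm3 := hm.eq_or_lt
    · exact absurd hones h2
    · simpa [eps, hones] using Nat.choose_pos (by omega)
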